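/- arXiv:1810.09271 — 3 statements merged into one kernel-verified Lean document; each statement's English description precedes it below -/
import Mathlib

section
/- Let n ≥ 1, let 0 < ε < 1, R > 0, x₀ ∈ ℝⁿ, and set Q := B_R(x₀), the open Euclidean ball of radius R centered at x₀. Let E ⊂ F ⊂ Q be two Lebesgue measurable sets with ℒⁿ(E) < ε·ℒⁿ(Q), and suppose the following property holds: for every x ∈ Q and every r ∈ (0, R], if ℒⁿ(E ∩ B_r(x)) ≥ ε·ℒⁿ(B_r(x)) then B_r(x) ∩ Q ⊂ F. Then ℒⁿ(E) ≤ C·ε·ℒⁿ(F) for some constant C depending only on the dimension n. -/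
open MeasureTheory Metric Set Filter
open scoped ENNReal

lemma aux_inner_ball' {X : Type*} [NormedAddCommGroup X] [NormedSpace ℝ X]
    (x₀ x : X) {ρ R : ℝ} (hρ : 0 < ρ) (hρR : ρ ≤ R) (hx : x ∈ ball x₀ R) :
    ∃ x' : X, ball x' (ρ/2) ⊆ ball x ρ ∩ ball x₀ R := by
  rw [mem_ball] at hx
  obtain ⟨d, hd⟩ : ∃ d, dist x x₀ = d := ⟨_, rfl⟩
  rw [hd] at hx
  by_cases hcase : d ≤ ρ/2
  · refine ⟨x₀, fun y hy => ?_⟩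
    rw [mem_ball] at hy
    constructor
    · rw [mem_ball]
      calc dist y x ≤ dist y x₀ + dist x₀ x := dist_triangle _ _ _
        _ < ρ/2 + ρ/2 := by rw [dist_comm x₀ x, hd]; exact add_lt_add_of_lt_of_le hy hcase
        _ = ρ := by ring
    · exact mem_ball.2 (hy.trans_le (by linarith))
  · push_neg at hcase
    have hd0 : 0 < d := lt_trans (by linarith) hcase
    set c : ℝ := ρ / (2 * d) with hc
    have hc0 : 0 < c := by positivity
    have hc1 : c < 1 := by
      rw [hc, div_lt_one (by positivity)]; linarith
    refine ⟨x + c • (x₀ - x), fun y hy => ?_⟩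
    rw [mem_ball] at hy
    have h1 : dist (x + c • (x₀ - x)) x = ρ / 2 := by
      rw [dist_eq_norm, add_sub_cancel_left, norm_smul, Real.norm_eq_abs,
        abs_of_pos hc0, hc]
      rw [show ‖x₀ - x‖ = d by rw [← hd, dist_comm, dist_eq_norm]]
      field_simp [hd0.ne']
    have h2 : dist (x + c • (x₀ - x)) x₀ = d - ρ/2 := by
      have : x + c • (x₀ - x) - x₀ = (1 - c) • (x - x₀) := by
        module
      rw [dist_eq_norm, this, norm_smul, Real.norm_eq_abs, abs_of_pos (by linarith),
        show ‖x - x₀‖ = d by rw [← hd, dist_eq_norm]]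
      rw [hc]
      field_simp [hd0.ne']
    constructor
    · rw [mem_ball]
      calc dist y x ≤ dist y (x + c • (x₀ - x)) + dist (x + c • (x₀ - x)) x :=
            dist_triangle _ _ _
        _ < ρ/2 + ρ/2 := by rw [h1]; linarith
        _ = ρ := by ring
    · rw [mem_ball]
      calc dist y x₀ ≤ dist y (x + c • (x₀ - x)) + dist (x + c • (x₀ - x)) x₀ :=
            dist_triangle _ _ _
        _ < ρ/2 + (d - ρ/2) := by rw [h2]; linarith
        _ = d := by ring
        _ < R := hx

/-- Vitali-type covering lemma (substitute for the Calderón–Zygmund–Krylov–Safonov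
decomposition): if `E ⊆ F ⊆ Q = B_R(x₀)`, `ℒⁿ(E) < ε ℒⁿ(Q)`, and whenever
`ℒⁿ(E ∩ B_r(x)) ≥ ε ℒⁿ(B_r(x))` (for `x ∈ Q`, `0 < r ≤ R`) one has
`B_r(x) ∩ Q ⊆ F`, then `ℒⁿ(E) ≤ C ε ℒⁿ(F)` with `C = C(n)`. -/
theorem stmt0 (n : ℕ) (hn : 1 ≤ n) :
    ∃ C : ℝ, 0 < C ∧
      ∀ (ε R : ℝ) (x₀ : EuclideanSpace ℝ (Fin n))
        (E F : Set (EuclideanSpace ℝ (Fin n))),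
        0 < ε → ε < 1 → 0 < R →
        MeasurableSet E → MeasurableSet F →
        E ⊆ F → F ⊆ ball x₀ R →
        volume E < ENNReal.ofReal ε * volume (ball x₀ R) →
        (∀ x ∈ ball x₀ R, ∀ r : ℝ, 0 < r → r ≤ R →
          ENNReal.ofReal ε * volume (ball x r) ≤ volume (E ∩ ball x r) →
          ball x r ∩ ball x₀ R ⊆ F) →
        volume E ≤ ENNReal.ofReal (C * ε) * volume F := by
  classical
  refine ⟨10 ^ n, by positivity, ?_⟩
  intro ε R x₀ E F hε hε1 hR hE hF hEF hFQ hsmall hyp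
  have hfr : Module.finrank ℝ (EuclideanSpace ℝ (Fin n)) = n := finrank_euclideanSpace_fin
  haveI : Nontrivial (EuclideanSpace ℝ (Fin n)) :=
    Module.nontrivial_of_finrank_pos (R := ℝ)
      (by omega : 0 < Module.finrank ℝ (EuclideanSpace ℝ (Fin n)))
  set ω : ℝ≥0∞ := volume (ball (0 : EuclideanSpace ℝ (Fin n)) 1) with hω
  have hω0 : ω ≠ 0 := (measure_ball_pos _ _ one_pos).ne'
  have hωt : ω ≠ ⊤ := measure_ball_lt_top.ne
  have hvcb : ∀ (x : EuclideanSpace ℝ (Fin n)) (r : ℝ), 0 ≤ r →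
      volume (closedBall x r) = ENNReal.ofReal (r ^ n) * ω := by
    intro x r hr
    rw [Measure.addHaar_closedBall volume x hr, hfr, hω]
  have hcbb : ∀ (x : EuclideanSpace ℝ (Fin n)) (r : ℝ),
      volume (closedBall x r) = volume (ball x r) :=
    fun x r => Measure.addHaar_closedBall_eq_addHaar_ball volume x r
  -- E ∩ closed ball vs E ∩ open ball
  have hEcb : ∀ (x : EuclideanSpace ℝ (Fin n)) (r : ℝ),
      volume (E ∩ closedBall x r) = volume (E ∩ ball x r) := by
    intro x r
    refine le_antisymm ?_ (measure_mono (inter_subset_inter_right _ ball_subset_closedBall))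
    calc volume (E ∩ closedBall x r) ≤ volume ((E ∩ ball x r) ∪ sphere x r) := by
          refine measure_mono ?_
          rw [← ball_union_sphere]
          rintro y ⟨hyE, hy⟩
          rcases hy with hy | hy
          · exact Or.inl ⟨hyE, hy⟩
          · exact Or.inr hy
      _ ≤ volume (E ∩ ball x r) + volume (sphere x r) := measure_union_le _ _
      _ = volume (E ∩ ball x r) := by rw [Measure.addHaar_sphere volume x r, add_zero]
  -- the critical radius machinery
  set S : EuclideanSpace ℝ (Fin n) → Set ℝ := fun x =>
    {r | 0 < r ∧ r ≤ R ∧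
      ENNReal.ofReal ε * volume (closedBall x r) ≤ volume (E ∩ closedBall x r)} with hS
  set ρ : EuclideanSpace ℝ (Fin n) → ℝ := fun x => sSup (S x) with hρdef
  set G : Set (EuclideanSpace ℝ (Fin n)) := {x | x ∈ E ∧ (S x).Nonempty} with hG
  have hGE : G ⊆ E := fun x hx => hx.1
  have hbdd : ∀ x, BddAbove (S x) := fun x => ⟨R, fun r hr => hr.2.1⟩
  have hρR : ∀ x ∈ G, ρ x ≤ R := fun x hx => csSup_le hx.2 fun r hr => hr.2.1
  have hρpos : ∀ x ∈ G, 0 < ρ x := by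
    intro x hx
    obtain ⟨r, hr⟩ := hx.2
    exact lt_of_lt_of_le hr.1 (le_csSup (hbdd x) hr)
  have hρS : ∀ x ∈ G, ENNReal.ofReal ε * volume (closedBall x (ρ x)) ≤
      volume (E ∩ closedBall x (ρ x)) := by
    intro x hx
    rw [hvcb x (ρ x) (hρpos x hx).le]
    have hlim : Tendsto (fun s : ℝ => ENNReal.ofReal ε * (ENNReal.ofReal (s ^ n) * ω))
        (nhdsWithin (ρ x) (Iio (ρ x)))
        (nhds (ENNReal.ofReal ε * (ENNReal.ofReal ((ρ x) ^ n) * ω))) := by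
      have t1 : Tendsto (fun s : ℝ => ENNReal.ofReal (s ^ n))
          (nhdsWithin (ρ x) (Iio (ρ x))) (nhds (ENNReal.ofReal ((ρ x) ^ n))) :=
        ((ENNReal.continuous_ofReal.comp (continuous_pow n)).tendsto (ρ x)).mono_left
          nhdsWithin_le_nhds
      exact ENNReal.Tendsto.const_mul (ENNReal.Tendsto.mul_const t1 (Or.inr hωt))
        (Or.inr ENNReal.ofReal_ne_top)
    refine le_of_tendsto hlim ?_
    filter_upwards [Ioo_mem_nhdsLT_of_mem
      (⟨hρpos x hx, le_refl (ρ x)⟩ : ρ x ∈ Ioc 0 (ρ x))] with s hs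
    obtain ⟨r, hrS, hsr⟩ := exists_lt_of_lt_csSup hx.2 hs.2
    have h1 : ENNReal.ofReal (s ^ n) ≤ ENNReal.ofReal (r ^ n) :=
      ENNReal.ofReal_le_ofReal (pow_le_pow_left₀ hs.1.le hsr.le n)
    calc ENNReal.ofReal ε * (ENNReal.ofReal (s ^ n) * ω)
        ≤ ENNReal.ofReal ε * (ENNReal.ofReal (r ^ n) * ω) := by gcongr
      _ = ENNReal.ofReal ε * volume (closedBall x r) := by rw [hvcb x r hrS.1.le]
      _ ≤ volume (E ∩ closedBall x r) := hrS.2.2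
      _ ≤ volume (E ∩ closedBall x (ρ x)) := by
          refine measure_mono (inter_subset_inter_right _ (closedBall_subset_closedBall ?_))
          exact le_csSup (hbdd x) hrS
  have hmax : ∀ x ∈ G, ∀ s : ℝ, ρ x < s → s ≤ R →
      volume (E ∩ closedBall x s) ≤ ENNReal.ofReal ε * volume (closedBall x s) := by
    intro x hx s hρs hsR
    by_contra hcon
    push_neg at hcon
    have : s ∈ S x := ⟨lt_of_le_of_lt (hρpos x hx).le hρs, hsR, hcon.le⟩
    exact absurd (le_csSup (hbdd x) this) (not_le.2 hρs)
  -- almost every point of E is in G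
  have hnull : volume (E \ G) = 0 := by
    have hdens := Besicovitch.ae_tendsto_measure_inter_div
      (volume : Measure (EuclideanSpace ℝ (Fin n))) E
    rw [ae_restrict_iff' hE] at hdens
    refine measure_mono_null ?_ (ae_iff.1 hdens)
    rintro x ⟨hxE, hxG⟩
    intro himp
    have ht := himp hxE
    refine hxG ⟨hxE, ?_⟩
    have hlt : ENNReal.ofReal ε < 1 := ENNReal.ofReal_lt_one.2 hε1
    have h1 : ∀ᶠ r in nhdsWithin (0:ℝ) (Ioi 0),
        ENNReal.ofReal ε < volume (E ∩ closedBall x r) / volume (closedBall x r) :=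
      ht.eventually_const_lt hlt
    have h2 : Ioc (0:ℝ) R ∈ nhdsWithin (0:ℝ) (Ioi 0) :=
      Ioc_mem_nhdsGT_of_mem ⟨le_refl 0, hR⟩
    obtain ⟨r, hr1, hr2⟩ := (h1.and (eventually_of_mem h2 fun r hr => hr)).exists
    have hb0 : volume (closedBall x r) ≠ 0 := by
      rw [hvcb x r hr2.1.le]
      exact mul_ne_zero (ENNReal.ofReal_pos.2 (pow_pos hr2.1 n)).ne' hω0
    have hbt : volume (closedBall x r) ≠ ⊤ := measure_closedBall_lt_top.ne
    refine ⟨r, hr2.1, hr2.2, ?_⟩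
    exact (ENNReal.le_div_iff_mul_le (Or.inl hb0) (Or.inl hbt)).1 hr1.le
  -- Vitali covering
  obtain ⟨u, huG, hdisj, hcover⟩ :=
    Vitali.exists_disjoint_subfamily_covering_enlargement_closedBall G id ρ R
      (fun a ha => hρR a ha) 5 (by norm_num)
  have hucnt : u.Countable := by
    refine Set.PairwiseDisjoint.countable_of_isOpen
      (s := fun b => ball b (ρ b)) (a := u) ?_ (fun b _ => isOpen_ball)
      (fun b hb => nonempty_ball.2 (hρpos b (huG hb)))
    exact hdisj.mono_on fun b hb => ball_subset_closedBall
  -- each selected ball (intersected with Q) is inside F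
  have hballF : ∀ b ∈ u, ball b (ρ b) ∩ ball x₀ R ⊆ F := by
    intro b hb
    have hbG := huG hb
    have hbQ : b ∈ ball x₀ R := hFQ (hEF (hGE hbG))
    refine hyp b hbQ (ρ b) (hρpos b hbG) (hρR b hbG) ?_
    rw [← hcbb, ← hEcb]
    exact hρS b hbG
  -- key per-ball estimate
  have hkey : ∀ b ∈ u, volume (E ∩ closedBall b (5 * ρ b)) ≤
      ENNReal.ofReal ε * ENNReal.ofReal ((5:ℝ) ^ n) * ENNReal.ofReal ((2:ℝ) ^ n) *
        volume (ball b (ρ b) ∩ ball x₀ R) := by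
    intro b hb
    have hbG := huG hb
    have hρb := hρpos b hbG
    have hbQ : b ∈ ball x₀ R := hFQ (hEF (hGE hbG))
    -- step A
    have hA : volume (E ∩ closedBall b (5 * ρ b)) ≤
        ENNReal.ofReal ε * volume (closedBall b (5 * ρ b)) := by
      rcases le_or_gt (5 * ρ b) R with h | h
      · exact hmax b hbG _ (by linarith) h
      · calc volume (E ∩ closedBall b (5 * ρ b)) ≤ volume E := measure_mono inter_subset_left
          _ ≤ ENNReal.ofReal ε * volume (ball x₀ R) := hsmall.le
          _ ≤ ENNReal.ofReal ε * volume (closedBall b (5 * ρ b)) := by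
              refine mul_le_mul_right ?_ _
              rw [← hcbb, hvcb x₀ R hR.le, hvcb b (5 * ρ b) (by linarith)]
              gcongr

    -- step B
    have hB : volume (closedBall b (5 * ρ b)) =
        ENNReal.ofReal ((5:ℝ) ^ n) * volume (closedBall b (ρ b)) := by
      rw [hvcb b (5 * ρ b) (by linarith), hvcb b (ρ b) hρb.le, mul_pow,
        ENNReal.ofReal_mul (by positivity), mul_assoc]
    -- step D
    have hD : volume (closedBall b (ρ b)) ≤
        ENNReal.ofReal ((2:ℝ) ^ n) * volume (ball b (ρ b) ∩ ball x₀ R) := by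
      obtain ⟨x', hx'⟩ := aux_inner_ball' x₀ b hρb (hρR b hbG) hbQ
      calc volume (closedBall b (ρ b)) = ENNReal.ofReal ((ρ b) ^ n) * ω :=
            hvcb b (ρ b) hρb.le
        _ = ENNReal.ofReal ((2:ℝ) ^ n) * (ENNReal.ofReal ((ρ b / 2) ^ n) * ω) := by
            have h2n : (ρ b) ^ n = (2:ℝ) ^ n * (ρ b / 2) ^ n := by rw [← mul_pow]; ring
            rw [h2n, ENNReal.ofReal_mul (by positivity), mul_assoc]
        _ = ENNReal.ofReal ((2:ℝ) ^ n) * volume (closedBall x' (ρ b / 2)) := by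
            rw [hvcb x' (ρ b / 2) (by linarith)]
        _ ≤ ENNReal.ofReal ((2:ℝ) ^ n) * volume (ball b (ρ b) ∩ ball x₀ R) := by
            rw [hcbb]
            exact mul_le_mul_right (measure_mono hx') _
    calc volume (E ∩ closedBall b (5 * ρ b)) ≤
        ENNReal.ofReal ε * volume (closedBall b (5 * ρ b)) := hA
      _ = ENNReal.ofReal ε * (ENNReal.ofReal ((5:ℝ) ^ n) * volume (closedBall b (ρ b))) := by
          rw [hB]
      _ ≤ ENNReal.ofReal ε * (ENNReal.ofReal ((5:ℝ) ^ n) *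
          (ENNReal.ofReal ((2:ℝ) ^ n) * volume (ball b (ρ b) ∩ ball x₀ R))) := by gcongr
      _ = ENNReal.ofReal ε * ENNReal.ofReal ((5:ℝ) ^ n) * ENNReal.ofReal ((2:ℝ) ^ n) *
          volume (ball b (ρ b) ∩ ball x₀ R) := by ring
  -- sum up
  have hGcover : G ⊆ ⋃ b ∈ u, E ∩ closedBall b (5 * ρ b) := by
    intro a ha
    obtain ⟨b, hbu, hsub⟩ := hcover a ha
    have : a ∈ closedBall (id a) (ρ a) := mem_closedBall_self (hρpos a ha).le
    exact mem_biUnion hbu ⟨hGE ha, hsub this⟩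
  have hsum : volume (⋃ b ∈ u, ball b (ρ b) ∩ ball x₀ R) =
      ∑' b : u, volume (ball (b : EuclideanSpace ℝ (Fin n)) (ρ b) ∩ ball x₀ R) := by
    refine measure_biUnion hucnt ?_ fun b _ => (isOpen_ball.inter isOpen_ball).measurableSet
    exact hdisj.mono_on fun b hb => (inter_subset_left).trans ball_subset_closedBall
  calc volume E ≤ volume (G ∪ (E \ G)) := measure_mono (fun x hx => by
        by_cases h : x ∈ G
        · exact Or.inl h
        · exact Or.inr ⟨hx, h⟩)
    _ ≤ volume G + volume (E \ G) := measure_union_le _ _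
    _ = volume G := by rw [hnull, add_zero]
    _ ≤ volume (⋃ b ∈ u, E ∩ closedBall b (5 * ρ b)) := measure_mono hGcover
    _ ≤ ∑' b : u, volume (E ∩ closedBall (b : EuclideanSpace ℝ (Fin n)) (5 * ρ b)) :=
        measure_biUnion_le volume hucnt _
    _ ≤ ∑' b : u, ENNReal.ofReal ε * ENNReal.ofReal ((5:ℝ) ^ n) * ENNReal.ofReal ((2:ℝ) ^ n) *
        volume (ball (b : EuclideanSpace ℝ (Fin n)) (ρ b) ∩ ball x₀ R) :=
        ENNReal.tsum_le_tsum fun b => hkey b b.2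
    _ = ENNReal.ofReal ε * ENNReal.ofReal ((5:ℝ) ^ n) * ENNReal.ofReal ((2:ℝ) ^ n) *
        ∑' b : u, volume (ball (b : EuclideanSpace ℝ (Fin n)) (ρ b) ∩ ball x₀ R) :=
        ENNReal.tsum_mul_left
    _ = ENNReal.ofReal ((10:ℝ) ^ n * ε) *
        volume (⋃ b ∈ u, ball b (ρ b) ∩ ball x₀ R) := by
        rw [hsum, ← ENNReal.ofReal_mul hε.le, ← ENNReal.ofReal_mul (by positivity)]
        congr 1
        rw [show (10:ℝ) ^ n * ε = ε * (5:ℝ) ^ n * (2:ℝ) ^ n by rw [mul_assoc, ← mul_pow]; norm_num [mul_comm]]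
    _ ≤ ENNReal.ofReal ((10:ℝ) ^ n * ε) * volume F := by
        refine mul_le_mul_right (measure_mono ?_) _
        exact iUnion₂_subset fun b hb => hballF b hb
end

section
/- Let D ⊂ ℝⁿ be a Lebesgue measurable set with 0 < ℒⁿ(D) < ∞, and let F, G : D → [0, ∞] be measurable functions. Let Θ > 0, 0 < q < Θ, 0 < s < ∞, γ > 0, C₁ > 0 and K ≥ 0 be constants, and assume ‖F‖_{L^{q,s}(D)} < ∞. Suppose that for every ε ∈ (0,1) and every λ > ε^{-1/γ}·K the good-λ inequality ℒⁿ({x ∈ D : F(x) > ε^{-1/Θ}·λ}) ≤ C₁·ε·ℒⁿ({x ∈ D : F(x) > λ}) + ℒⁿ({x ∈ D : G(x) > ε^{1/γ}·λ}) holds. Then there exists a constant C depending only on n, q, s, Θ, γ, C₁ such that ‖F‖_{L^{q,s}(D)} ≤ C·( K·ℒⁿ(D)^{1/q} + ‖G‖_{L^{q,s}(D)} ). -/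
/-!
Writing `μ_F(t) = ℒⁿ{F > t}`, one has `‖F‖^s = q ∫₀^∞ t^{s-1} μ_F(t)^{s/q} dt`. Substitute
`t ↦ ε^{-1/Θ} t` and split the integral at `λ₀ = ε^{-1/γ} K`. Below `λ₀` bound `μ_F` by `ℒⁿ(D)`,
which produces the term `K^s ℒⁿ(D)^{s/q}`. Above `λ₀` the good-λ inequality bounds the integrand by
`(C₁ ε)^{s/q} μ_F(t)^{s/q}` plus `μ_G(ε^{1/γ} t)^{s/q}`, up to the factor `2^{s/q}`. The first part
comes back as `ε^{-s/Θ} (C₁ ε)^{s/q}` times `‖F‖^s`, and this factor tends to `0` with `ε` because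
`q < Θ`. For small `ε` it is at most `1/2`, so it can be absorbed into the left-hand side, which is
finite by hypothesis.
-/

open MeasureTheory Set Filter Topology
open scoped ENNReal

noncomputable def paperLorentzNorm {n : ℕ} (q s : ℝ)
    (D : Set (EuclideanSpace ℝ (Fin n))) (g : EuclideanSpace ℝ (Fin n) → ℝ≥0∞) :
    ℝ≥0∞ :=
  (ENNReal.ofReal q *
      ∫⁻ t in Ioi (0 : ℝ),
        ENNReal.ofReal (t ^ (s - 1)) *
          (volume {x ∈ D | ENNReal.ofReal t < g x}) ^ (s / q)) ^ (1 / s)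

lemma lintegral_comp_mul_left_Ioi {c : ℝ} (hc : 0 < c) (f : ℝ → ℝ≥0∞) :
    ∫⁻ t in Ioi 0, f (c * t) = ENNReal.ofReal c⁻¹ * ∫⁻ t in Ioi 0, f t := by
  have hpre : (c * ·) ⁻¹' Ioi 0 = Ioi (0 : ℝ) := by
    ext t; simp [mul_pos_iff_of_pos_left hc]
  have hmap : (volume.restrict (Ioi (0 : ℝ))).map (c * ·) =
      ENNReal.ofReal c⁻¹ • volume.restrict (Ioi 0) := by
    conv_lhs => rw [← hpre]
    rw [← Measure.restrict_map (measurable_const_mul c) measurableSet_Ioi,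
      Real.map_volume_mul_left hc.ne', abs_of_pos (inv_pos.2 hc), Measure.restrict_smul]
  rw [← smul_eq_mul, ← lintegral_smul_measure, ← hmap,
    (measurableEmbedding_mulLeft₀ hc.ne').lintegral_map]

lemma lintegral_Ioc_rpow_sub_one {b s : ℝ} (hb : 0 ≤ b) (hs : 0 < s) :
    ∫⁻ t in Ioc 0 b, ENNReal.ofReal (t ^ (s - 1)) = ENNReal.ofReal (b ^ s / s) := by
  have hint : IntegrableOn (fun t : ℝ ↦ t ^ (s - 1)) (Ioc 0 b) :=
    (intervalIntegral.intervalIntegrable_rpow' (by linarith : (-1 : ℝ) < s - 1)).1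
  rw [← ofReal_integral_eq_lintegral_ofReal hint
      ((ae_restrict_iff' measurableSet_Ioc).2 (ae_of_all _ fun t ht ↦
        Real.rpow_nonneg ht.1.le _)),
    ← intervalIntegral.integral_of_le hb, integral_rpow (Or.inl (by linarith)),
    sub_add_cancel, Real.zero_rpow hs.ne', sub_zero]

lemma exists_mem_Ioo_mul_rpow_le {a η : ℝ} (ha : 0 < a) (hη : 0 < η) (B : ℝ) :
    ∃ ε ∈ Ioo (0 : ℝ) 1, B * ε ^ a ≤ η := by
  have hlim : Tendsto (fun ε : ℝ ↦ B * ε ^ a) (𝓝[>] 0) (𝓝 0) := by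
    have := ((Real.continuousAt_rpow_const 0 a (Or.inr ha.le)).const_mul B).tendsto
    rw [Real.zero_rpow ha.ne', mul_zero] at this
    exact this.mono_left nhdsWithin_le_nhds
  obtain ⟨ε, hε, hε01⟩ :=
    ((hlim.eventually (ge_mem_nhds hη)).and (Ioo_mem_nhdsGT one_pos)).exists
  exact ⟨ε, hε01, hε⟩

namespace ENNReal

lemma le_two_mul_of_le_add_half {x a : ℝ≥0∞} (hx : x ≠ ⊤) (h : x ≤ a + x / 2) :
    x ≤ 2 * a := by
  have : x / 2 ≤ a := by
    refine (ENNReal.add_le_add_iff_right (ENNReal.div_ne_top hx two_ne_zero)).1 ?_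
    rwa [ENNReal.add_halves]
  calc x = 2 * (x / 2) := (ENNReal.mul_div_cancel two_ne_zero ofNat_ne_top).symm
    _ ≤ 2 * a := by gcongr

lemma le_rpow_one_div_mul_add_of_rpow_le {s : ℝ} (hs : 0 < s) {a x y z : ℝ≥0∞}
    (h : z ^ s ≤ a * (x ^ s + y ^ s)) : z ≤ (2 * a) ^ (1 / s) * (x + y) := by
  have hsum : x ^ s + y ^ s ≤ 2 * (x + y) ^ s := by
    rw [two_mul]
    gcongr
    exacts [le_self_add, le_add_self]
  rw [← ENNReal.rpow_le_rpow_iff hs, ENNReal.mul_rpow_of_nonneg _ _ hs.le,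
    ← ENNReal.rpow_mul, one_div_mul_cancel hs.ne', ENNReal.rpow_one]
  calc z ^ s ≤ a * (2 * (x + y) ^ s) := h.trans (by gcongr)
    _ = 2 * a * (x + y) ^ s := by ring

end ENNReal

section Distribution

variable {α : Type*} [MeasurableSpace α]

noncomputable def distributionOn (μ : Measure α) (D : Set α) (g : α → ℝ≥0∞) (t : ℝ) : ℝ≥0∞ :=
  μ {x ∈ D | ENNReal.ofReal t < g x}

lemma distributionOn_antitone (μ : Measure α) (D : Set α) (g : α → ℝ≥0∞) :
    Antitone (distributionOn μ D g) := fun _ _ hst ↦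
  measure_mono fun _ hx ↦ ⟨hx.1, (ENNReal.ofReal_le_ofReal hst).trans_lt hx.2⟩

lemma distributionOn_le_measure (μ : Measure α) (D : Set α) (g : α → ℝ≥0∞) (t : ℝ) :
    distributionOn μ D g t ≤ μ D :=
  measure_mono fun _ hx ↦ hx.1

end Distribution

noncomputable def lorentzIntegral (s p : ℝ) (A : ℝ → ℝ≥0∞) : ℝ≥0∞ :=
  ∫⁻ t in Ioi 0, ENNReal.ofReal (t ^ (s - 1)) * A t ^ p

section LorentzIntegral

variable {s p : ℝ}

lemma lorentzIntegral_comp_mul_left {c : ℝ} (hc : 0 < c) (A : ℝ → ℝ≥0∞) :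
    lorentzIntegral s p (fun t ↦ A (c * t)) = ENNReal.ofReal (c ^ (-s)) * lorentzIntegral s p A := by
  have hweight : ∀ t ∈ Ioi (0 : ℝ), ENNReal.ofReal (t ^ (s - 1)) * A (c * t) ^ p =
      ENNReal.ofReal (c ^ (1 - s)) * (ENNReal.ofReal ((c * t) ^ (s - 1)) * A (c * t) ^ p) := by
    intro t ht
    rw [← mul_assoc, ← ENNReal.ofReal_mul (by positivity), Real.mul_rpow hc.le (le_of_lt ht),
      ← mul_assoc, ← Real.rpow_add hc, show 1 - s + (s - 1) = 0 by ring, Real.rpow_zero, one_mul]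
  have hconst : c ^ (1 - s) * c⁻¹ = c ^ (-s) := by
    rw [← Real.rpow_neg_one, ← Real.rpow_add hc]
    ring_nf
  rw [lorentzIntegral, setLIntegral_congr_fun measurableSet_Ioi hweight,
    lintegral_const_mul' _ _ ENNReal.ofReal_ne_top,
    lintegral_comp_mul_left_Ioi hc (fun u ↦ ENNReal.ofReal (u ^ (s - 1)) * A u ^ p),
    ← mul_assoc, ← ENNReal.ofReal_mul (by positivity), hconst, lorentzIntegral]

lemma lorentzIntegral_comp_mul_left_le_of_goodLambda {c d l₀ : ℝ} {δ M : ℝ≥0∞} {A B : ℝ → ℝ≥0∞}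
    (hs : 0 < s) (hp : 0 ≤ p) (hl₀ : 0 ≤ l₀) (hA : Measurable A) (hAM : ∀ t, A t ≤ M)
    (hgood : ∀ t, l₀ < t → A (c * t) ≤ δ * A t + B (d * t)) :
    lorentzIntegral s p (fun t ↦ A (c * t)) ≤
      ENNReal.ofReal (l₀ ^ s / s) * M ^ p + 2 ^ p * δ ^ p * lorentzIntegral s p A +
        2 ^ p * lorentzIntegral s p (fun t ↦ B (d * t)) := by
  set w : ℝ → ℝ≥0∞ := fun t ↦ ENNReal.ofReal (t ^ (s - 1))
  have hw : Measurable w := by fun_prop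
  have hwA : Measurable fun t ↦ w t * A t ^ p := by fun_prop
  have hlarge : ∀ t ∈ Ioi l₀, w t * A (c * t) ^ p ≤
      2 ^ p * δ ^ p * (w t * A t ^ p) + 2 ^ p * (w t * B (d * t) ^ p) := by
    intro t ht
    calc w t * A (c * t) ^ p ≤ w t * (2 ^ p * ((δ * A t) ^ p + B (d * t) ^ p)) := by
          gcongr
          exact (ENNReal.rpow_le_rpow (hgood t ht) hp).trans
            (ENNReal.add_rpow_le_two_rpow_mul_rpow_add_rpow _ _ hp)
      _ = _ := by
          rw [ENNReal.mul_rpow_of_nonneg _ _ hp]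
          ring
  calc lorentzIntegral s p (fun t ↦ A (c * t))
      ≤ (∫⁻ t in Ioc 0 l₀, w t * A (c * t) ^ p) + ∫⁻ t in Ioi l₀, w t * A (c * t) ^ p := by
        refine (lintegral_mono_set fun t ht ↦ ?_).trans (lintegral_union_le _ _ _)
        exact (le_or_gt t l₀).imp (fun h ↦ ⟨ht, h⟩) id
    _ ≤ (∫⁻ t in Ioc 0 l₀, M ^ p * w t) +
          ∫⁻ t in Ioi 0, 2 ^ p * δ ^ p * (w t * A t ^ p) + 2 ^ p * (w t * B (d * t) ^ p) := by
        refine add_le_add (lintegral_mono fun t ↦ ?_) ?_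
        · rw [mul_comm]
          gcongr
          exact hAM _
        · exact (setLIntegral_mono' measurableSet_Ioi hlarge).trans
            (lintegral_mono_set (Ioi_subset_Ioi hl₀))
    _ = _ := by
        rw [lintegral_const_mul _ hw, lintegral_Ioc_rpow_sub_one hl₀ hs,
          lintegral_add_left (hwA.const_mul _), lintegral_const_mul _ hwA,
          lintegral_const_mul' _ _ (by simp), lorentzIntegral, lorentzIntegral]
        ring

lemma lorentzIntegral_le_of_goodLambda {c d l₀ : ℝ} {δ M : ℝ≥0∞} {A B : ℝ → ℝ≥0∞}
    (hs : 0 < s) (hp : 0 ≤ p) (hc : 0 < c) (hd : 0 < d) (hl₀ : 0 ≤ l₀) (hA : Measurable A)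
    (hAM : ∀ t, A t ≤ M) (hgood : ∀ t, l₀ < t → A (c * t) ≤ δ * A t + B (d * t))
    (hδ : ENNReal.ofReal (c ^ s) * (2 ^ p * δ ^ p) ≤ 1 / 2) (hfin : lorentzIntegral s p A ≠ ⊤) :
    lorentzIntegral s p A ≤ 2 * ENNReal.ofReal (c ^ s) *
      (ENNReal.ofReal (l₀ ^ s / s) * M ^ p +
        2 ^ p * ENNReal.ofReal (d ^ (-s)) * lorentzIntegral s p B) := by
  have hscale : lorentzIntegral s p A =
      ENNReal.ofReal (c ^ s) * lorentzIntegral s p (fun t ↦ A (c * t)) := by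
    rw [lorentzIntegral_comp_mul_left hc, ← mul_assoc, ← ENNReal.ofReal_mul (by positivity),
      ← Real.rpow_add hc, add_neg_cancel, Real.rpow_zero, ENNReal.ofReal_one, one_mul]
  have hcomp := lorentzIntegral_comp_mul_left_le_of_goodLambda hs hp hl₀ hA hAM hgood
  rw [lorentzIntegral_comp_mul_left hd] at hcomp
  rw [mul_assoc]
  refine ENNReal.le_two_mul_of_le_add_half hfin ?_
  calc lorentzIntegral s p A
      = ENNReal.ofReal (c ^ s) * lorentzIntegral s p (fun t ↦ A (c * t)) := hscale
    _ ≤ ENNReal.ofReal (c ^ s) * (ENNReal.ofReal (l₀ ^ s / s) * M ^ p +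
          2 ^ p * δ ^ p * lorentzIntegral s p A +
          2 ^ p * (ENNReal.ofReal (d ^ (-s)) * lorentzIntegral s p B)) := by gcongr
    _ = ENNReal.ofReal (c ^ s) * (ENNReal.ofReal (l₀ ^ s / s) * M ^ p +
          2 ^ p * ENNReal.ofReal (d ^ (-s)) * lorentzIntegral s p B) +
          ENNReal.ofReal (c ^ s) * (2 ^ p * δ ^ p) * lorentzIntegral s p A := by ring
    _ ≤ _ := by
        grw [hδ]
        rw [one_div, ENNReal.div_eq_inv_mul]

end LorentzIntegral

lemma exists_eps_goodLambda_factor_le_half {q s Θ C₁ : ℝ} (hq : 0 < q) (hqΘ : q < Θ)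
    (hs : 0 < s) (hC₁ : 0 < C₁) :
    ∃ ε ∈ Ioo (0 : ℝ) 1, ENNReal.ofReal ((ε ^ (-1 / Θ)) ^ s) *
      (2 ^ (s / q) * ENNReal.ofReal (C₁ * ε) ^ (s / q)) ≤ 1 / 2 := by
  have hexp : 0 < s / q - s / Θ := sub_pos.2 (div_lt_div_of_pos_left hs hq hqΘ)
  obtain ⟨ε, hε, hsmall⟩ :=
    exists_mem_Ioo_mul_rpow_le hexp one_half_pos ((2 : ℝ) ^ (s / q) * C₁ ^ (s / q))
  refine ⟨ε, hε, ?_⟩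
  have hε0 := hε.1
  have hfactor : (ε ^ (-1 / Θ)) ^ s * (2 ^ (s / q) * (C₁ * ε) ^ (s / q)) =
      2 ^ (s / q) * C₁ ^ (s / q) * ε ^ (s / q - s / Θ) := by
    rw [← Real.rpow_mul hε0.le, Real.mul_rpow hC₁.le hε0.le, sub_eq_add_neg,
      Real.rpow_add hε0, show -1 / Θ * s = -(s / Θ) by ring]
    ring
  calc ENNReal.ofReal ((ε ^ (-1 / Θ)) ^ s) * (2 ^ (s / q) * ENNReal.ofReal (C₁ * ε) ^ (s / q))
      = ENNReal.ofReal ((ε ^ (-1 / Θ)) ^ s * (2 ^ (s / q) * (C₁ * ε) ^ (s / q))) := by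
        rw [ENNReal.ofReal_rpow_of_nonneg (by positivity) (by positivity),
          ← ENNReal.ofReal_ofNat, ENNReal.ofReal_rpow_of_pos two_pos,
          ← ENNReal.ofReal_mul (by positivity), ← ENNReal.ofReal_mul (by positivity)]
    _ ≤ ENNReal.ofReal (1 / 2) := by
        rw [hfactor]
        exact ENNReal.ofReal_le_ofReal hsmall
    _ = 1 / 2 := by
        rw [ENNReal.ofReal_div_of_pos two_pos, ENNReal.ofReal_one, ENNReal.ofReal_ofNat]

lemma paperLorentzNorm_rpow {n : ℕ} {q s : ℝ} (hs : 0 < s) (D : Set (EuclideanSpace ℝ (Fin n)))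
    (g : EuclideanSpace ℝ (Fin n) → ℝ≥0∞) :
    paperLorentzNorm q s D g ^ s =
      ENNReal.ofReal q * lorentzIntegral s (s / q) (distributionOn volume D g) := by
  rw [paperLorentzNorm, ← ENNReal.rpow_mul, one_div_mul_cancel hs.ne', ENNReal.rpow_one]
  rfl

lemma paperLorentzNorm_rpow_le_of_goodLambda {n : ℕ} {q s c d e K : ℝ} {δ : ℝ≥0∞}
    {D : Set (EuclideanSpace ℝ (Fin n))} {F G : EuclideanSpace ℝ (Fin n) → ℝ≥0∞}
    (hq : 0 < q) (hs : 0 < s) (hc : 0 < c) (hd : 0 < d) (he : 0 ≤ e) (hK : 0 ≤ K)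
    (hgood : ∀ t, e * K < t → distributionOn volume D F (c * t) ≤
      δ * distributionOn volume D F t + distributionOn volume D G (d * t))
    (hδ : ENNReal.ofReal (c ^ s) * (2 ^ (s / q) * δ ^ (s / q)) ≤ 1 / 2)
    (hFfin : paperLorentzNorm q s D F < ⊤) :
    paperLorentzNorm q s D F ^ s ≤ 2 * ENNReal.ofReal (c ^ s) *
      (ENNReal.ofReal (q * e ^ s / s) * (ENNReal.ofReal K * volume D ^ (1 / q)) ^ s +
        2 ^ (s / q) * ENNReal.ofReal (d ^ (-s)) * paperLorentzNorm q s D G ^ s) := by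
  have hfin : lorentzIntegral s (s / q) (distributionOn volume D F) ≠ ⊤ := by
    have := paperLorentzNorm_rpow hs D F ▸ ENNReal.rpow_ne_top_of_nonneg hs.le hFfin.ne
    exact (ENNReal.lt_top_of_mul_ne_top_right this (by simpa using hq)).ne
  have hF := lorentzIntegral_le_of_goodLambda hs (by positivity) hc hd (mul_nonneg he hK)
    (distributionOn_antitone _ _ _).measurable (distributionOn_le_measure volume D F) hgood hδ hfin
  have hKD : ENNReal.ofReal q * ENNReal.ofReal ((e * K) ^ s / s) * volume D ^ (s / q) =
      ENNReal.ofReal (q * e ^ s / s) * (ENNReal.ofReal K * volume D ^ (1 / q)) ^ s := by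
    rw [← ENNReal.ofReal_mul hq.le, ENNReal.mul_rpow_of_nonneg _ _ hs.le,
      ENNReal.ofReal_rpow_of_nonneg hK hs.le, ← ENNReal.rpow_mul, ← mul_assoc,
      ← ENNReal.ofReal_mul (by positivity), Real.mul_rpow he hK, one_div_mul_eq_div]
    congr 2
    ring
  rw [paperLorentzNorm_rpow hs, paperLorentzNorm_rpow hs, ← hKD]
  calc ENNReal.ofReal q * lorentzIntegral s (s / q) (distributionOn volume D F)
      ≤ ENNReal.ofReal q * (2 * ENNReal.ofReal (c ^ s) *
          (ENNReal.ofReal ((e * K) ^ s / s) * volume D ^ (s / q) +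
            2 ^ (s / q) * ENNReal.ofReal (d ^ (-s)) *
              lorentzIntegral s (s / q) (distributionOn volume D G))) := by gcongr
    _ = _ := by ring

theorem stmt3_general (n : ℕ) (q s Θ γ C₁ : ℝ) (hq : 0 < q) (hqΘ : q < Θ)
    (hs : 0 < s) (hC₁ : 0 < C₁) :
    ∃ C : ℝ, 0 < C ∧
      ∀ (D : Set (EuclideanSpace ℝ (Fin n)))
        (F G : EuclideanSpace ℝ (Fin n) → ℝ≥0∞) (K : ℝ),
        MeasurableSet D → 0 < volume D → volume D < ⊤ →
        Measurable F → Measurable G → 0 ≤ K →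
        paperLorentzNorm q s D F < ⊤ →
        (∀ ε : ℝ, 0 < ε → ε < 1 → ∀ l : ℝ, ε ^ (-1 / γ) * K < l →
          volume {x ∈ D | ENNReal.ofReal (ε ^ (-1 / Θ) * l) < F x} ≤
            ENNReal.ofReal (C₁ * ε) * volume {x ∈ D | ENNReal.ofReal l < F x} +
              volume {x ∈ D | ENNReal.ofReal (ε ^ (1 / γ) * l) < G x}) →
        paperLorentzNorm q s D F ≤
          ENNReal.ofReal C *
            (ENNReal.ofReal K * (volume D) ^ (1 / q) + paperLorentzNorm q s D G) := by
  obtain ⟨ε, ⟨hε0, hε1⟩, hε⟩ := exists_eps_goodLambda_factor_le_half hq hqΘ hs hC₁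
  set m : ℝ≥0∞ := max (ENNReal.ofReal (q * (ε ^ (-1 / γ)) ^ s / s))
    (2 ^ (s / q) * ENNReal.ofReal ((ε ^ (1 / γ)) ^ (-s)))
  set a : ℝ≥0∞ := 2 * ENNReal.ofReal ((ε ^ (-1 / Θ)) ^ s) * m
  have ha : 0 < 2 * a := by positivity
  have ha' : 2 * a ≠ ⊤ := by finiteness
  refine ⟨((2 * a) ^ (1 / s)).toReal,
    ENNReal.toReal_pos (ENNReal.rpow_pos ha ha').ne' (by finiteness), ?_⟩
  intro D F G K _ _ _ _ _ hK hFfin hgood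
  rw [ENNReal.ofReal_toReal (by finiteness)]
  refine ENNReal.le_rpow_one_div_mul_add_of_rpow_le hs ?_
  calc paperLorentzNorm q s D F ^ s
      ≤ 2 * ENNReal.ofReal ((ε ^ (-1 / Θ)) ^ s) *
          (ENNReal.ofReal (q * (ε ^ (-1 / γ)) ^ s / s) * (ENNReal.ofReal K * volume D ^ (1 / q)) ^ s +
            2 ^ (s / q) * ENNReal.ofReal ((ε ^ (1 / γ)) ^ (-s)) * paperLorentzNorm q s D G ^ s) :=
        paperLorentzNorm_rpow_le_of_goodLambda hq hs (by positivity) (by positivity)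
          (by positivity) hK (hgood ε hε0 hε1) hε hFfin
    _ ≤ 2 * ENNReal.ofReal ((ε ^ (-1 / Θ)) ^ s) *
          (m * (ENNReal.ofReal K * volume D ^ (1 / q)) ^ s + m * paperLorentzNorm q s D G ^ s) := by
        gcongr
        exacts [le_max_left _ _, le_max_right _ _]
    _ = a * ((ENNReal.ofReal K * volume D ^ (1 / q)) ^ s + paperLorentzNorm q s D G ^ s) := by
        ring

/-- Good-λ inequalities imply a Lorentz-norm bound: if for all `ε ∈ (0,1)` and
`λ > ε^{-1/γ} K` one has
`ℒⁿ({F > ε^{-1/Θ} λ}) ≤ C₁ ε ℒⁿ({F > λ}) + ℒⁿ({G > ε^{1/γ} λ})` on `D`, then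
`‖F‖_{L^{q,s}(D)} ≤ C (K ℒⁿ(D)^{1/q} + ‖G‖_{L^{q,s}(D)})` with
`C = C(n,q,s,Θ,γ,C₁)`. -/
theorem stmt3 (n : ℕ) (q s Θ γ C₁ : ℝ) (hΘ : 0 < Θ) (hq : 0 < q) (hqΘ : q < Θ)
    (hs : 0 < s) (hγ : 0 < γ) (hC₁ : 0 < C₁) :
    ∃ C : ℝ, 0 < C ∧
      ∀ (D : Set (EuclideanSpace ℝ (Fin n)))
        (F G : EuclideanSpace ℝ (Fin n) → ℝ≥0∞) (K : ℝ),
        MeasurableSet D → 0 < volume D → volume D < ⊤ →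
        Measurable F → Measurable G → 0 ≤ K →
        paperLorentzNorm q s D F < ⊤ →
        (∀ ε : ℝ, 0 < ε → ε < 1 → ∀ l : ℝ, ε ^ (-1 / γ) * K < l →
          volume {x ∈ D | ENNReal.ofReal (ε ^ (-1 / Θ) * l) < F x} ≤
            ENNReal.ofReal (C₁ * ε) * volume {x ∈ D | ENNReal.ofReal l < F x} +
              volume {x ∈ D | ENNReal.ofReal (ε ^ (1 / γ) * l) < G x}) →
        paperLorentzNorm q s D F ≤
          ENNReal.ofReal C *
            (ENNReal.ofReal K * (volume D) ^ (1 / q) + paperLorentzNorm q s D G) :=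
  stmt3_general n q s Θ γ C₁ hq hqΘ hs hC₁
end

section
/- Let n ≥ 2, let Ω ⊂ ℝⁿ be a bounded measurable set and T₀ := diam(Ω) > 0. Let f ∈ L¹(Ω), let m > 1 and 0 < κ ≤ n, and set θ := κ/m. Then there is a constant C depending only on n and m such that sup_{x ∈ Ω, 0 < ρ < T₀} ρ^{θ−n} ∫_{B_ρ(x) ∩ Ω} |f| dy ≤ C · sup_{x' ∈ Ω, 0 < ρ' < T₀} ρ'^{(κ−n)/m} ‖f‖_{L^{m,∞}(B_{ρ'}(x') ∩ Ω)}. -/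
/-!
By the layer-cake formula, `∫_A |f| = ∫₀^∞ |{y ∈ A : |f y| > t}| dt`. The integrand is at most
`|A|`, and at most `N ^ m * t ^ (-m)` where `N` is the weak `L^m` quasinorm of `f` on `A`.
Using the first bound below `τ = N |A| ^ (-1/m)` and the second above it gives the weak-type
estimate `∫_A |f| ≤ m / (m - 1) * |A| ^ (1 - 1/m) * N`. For `A ⊆ B_ρ(x)` the factor
`|A| ^ (1 - 1/m) ≲ ρ ^ (n - n/m)` turns the weight `ρ ^ (κ/m - n)` into `ρ ^ ((κ - n)/m)`.
-/

open MeasureTheory Metric Set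
open scoped ENNReal

theorem lintegral_Ioi_rpow_neg {m c : ℝ} (hm : 1 < m) (hc : 0 < c) :
    ∫⁻ t in Ioi c, ENNReal.ofReal (t ^ (-m)) = ENNReal.ofReal (c ^ (1 - m) / (m - 1)) := by
  rw [← ofReal_integral_eq_lintegral_ofReal (integrableOn_Ioi_rpow_of_lt (by linarith) hc)
    (ae_restrict_of_forall_mem measurableSet_Ioi fun t ht => by
      have : 0 < t := hc.trans ht
      positivity),
    integral_Ioi_rpow_of_lt (by linarith) hc, show -m + 1 = 1 - m by ring, neg_div, ← div_neg,
    neg_sub]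

theorem lintegral_Ioi_le_of_le_const_of_le_rpow {g : ℝ → ℝ≥0∞} {m V N : ℝ} (hm : 1 < m)
    (hV : 0 < V) (hN : 0 ≤ N) (hgV : ∀ t > 0, g t ≤ ENNReal.ofReal V)
    (hgN : ∀ t > 0, g t ≤ ENNReal.ofReal (N ^ m * t ^ (-m))) :
    ∫⁻ t in Ioi 0, g t ≤ ENNReal.ofReal (m / (m - 1) * V ^ (1 - 1 / m) * N) := by
  rcases hN.eq_or_lt with rfl | hN
  · calc ∫⁻ t in Ioi 0, g t ≤ ∫⁻ _ in Ioi (0 : ℝ), 0 :=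
          setLIntegral_mono' measurableSet_Ioi fun t ht => by
            simpa [Real.zero_rpow (by linarith : m ≠ 0)] using hgN t ht
      _ ≤ _ := by simp
  have hm1 : m - 1 ≠ 0 := by linarith
  set τ := N * V ^ (-1 / m) with hτ
  have hτ0 : 0 < τ := by positivity
  have head : ∫⁻ t in Ioc 0 τ, g t ≤ ENNReal.ofReal (V * τ) :=
    calc ∫⁻ t in Ioc 0 τ, g t ≤ ∫⁻ _ in Ioc 0 τ, ENNReal.ofReal V :=
          setLIntegral_mono' measurableSet_Ioc fun t ht => hgV t ht.1
      _ = ENNReal.ofReal (V * τ) := by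
          rw [setLIntegral_const, Real.volume_Ioc, sub_zero, ← ENNReal.ofReal_mul hV.le]
  have tail : ∫⁻ t in Ioi τ, g t ≤ ENNReal.ofReal (N ^ m * (τ ^ (1 - m) / (m - 1))) :=
    calc ∫⁻ t in Ioi τ, g t
        ≤ ∫⁻ t in Ioi τ, ENNReal.ofReal (N ^ m) * ENNReal.ofReal (t ^ (-m)) :=
          setLIntegral_mono' measurableSet_Ioi fun t ht => by
            rw [← ENNReal.ofReal_mul (by positivity)]
            exact hgN t (hτ0.trans ht)
      _ = ENNReal.ofReal (N ^ m * (τ ^ (1 - m) / (m - 1))) := by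
          rw [lintegral_const_mul' _ _ ENNReal.ofReal_ne_top, lintegral_Ioi_rpow_neg hm hτ0,
            ← ENNReal.ofReal_mul (by positivity)]
  have head_eq : V * τ = V ^ (1 - 1 / m) * N := by
    rw [hτ, sub_eq_add_neg, Real.rpow_add hV, Real.rpow_one, neg_div]
    ring
  have tail_eq : N ^ m * τ ^ (1 - m) = V ^ (1 - 1 / m) * N := by
    rw [hτ, Real.mul_rpow hN.le (by positivity), ← Real.rpow_mul hV.le, ← mul_assoc,
      ← Real.rpow_add hN, add_sub_cancel, Real.rpow_one,
      show -1 / m * (1 - m) = 1 - 1 / m by field_simp; ring, mul_comm]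
  calc ∫⁻ t in Ioi 0, g t = (∫⁻ t in Ioc 0 τ, g t) + ∫⁻ t in Ioi τ, g t := by
        rw [← Ioc_union_Ioi_eq_Ioi hτ0.le,
          lintegral_union measurableSet_Ioi Ioc_disjoint_Ioi_same]
    _ ≤ ENNReal.ofReal (V * τ) + ENNReal.ofReal (N ^ m * (τ ^ (1 - m) / (m - 1))) :=
        add_le_add head tail
    _ = ENNReal.ofReal (m / (m - 1) * V ^ (1 - 1 / m) * N) := by
        rw [← ENNReal.ofReal_add (by positivity) (by positivity), ← mul_div_assoc, tail_eq,
          head_eq]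
        congr 1
        field_simp
        ring

noncomputable def weakLpNorm {α : Type*} [MeasurableSpace α] (μ : Measure α) (A : Set α)
    (f : α → ℝ) (m : ℝ) : ℝ≥0∞ :=
  ⨆ (t : ℝ) (_ : 0 < t), ENNReal.ofReal t * μ {y ∈ A | t < |f y|} ^ (1 / m)

section
variable {α : Type*} [MeasurableSpace α] {μ : Measure α} {A : Set α} {f : α → ℝ} {m : ℝ}

theorem measure_lt_abs_le_of_weakLpNorm_le {N t : ℝ} (hm : 0 < m) (hN : 0 ≤ N) (ht : 0 < t)
    (hfN : weakLpNorm μ A f m ≤ ENNReal.ofReal N) :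
    μ {y ∈ A | t < |f y|} ≤ ENNReal.ofReal (N ^ m * t ^ (-m)) := by
  have hpow : μ {y ∈ A | t < |f y|} ^ (1 / m) ≤ ENNReal.ofReal (N / t) := by
    rw [ENNReal.ofReal_div_of_pos ht, ENNReal.le_div_iff_mul_le (by simp [ht]) (by simp), mul_comm]
    exact (le_iSup₂ (f := fun (t : ℝ) (_ : 0 < t) =>
      ENNReal.ofReal t * μ {y ∈ A | t < |f y|} ^ (1 / m)) t ht).trans hfN
  calc μ {y ∈ A | t < |f y|} = (μ {y ∈ A | t < |f y|} ^ (1 / m)) ^ m := by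
        rw [← ENNReal.rpow_mul, one_div_mul_cancel hm.ne', ENNReal.rpow_one]
    _ ≤ ENNReal.ofReal (N / t) ^ m := by gcongr
    _ = ENNReal.ofReal (N ^ m * t ^ (-m)) := by
        rw [ENNReal.ofReal_rpow_of_nonneg (by positivity) hm.le, Real.div_rpow hN ht.le,
          Real.rpow_neg ht.le, div_eq_mul_inv]

theorem setLIntegral_ofReal_abs_eq_lintegral_measure_lt (hf : AEMeasurable f (μ.restrict A)) :
    ∫⁻ y in A, ENNReal.ofReal |f y| ∂μ = ∫⁻ t in Ioi 0, μ {y ∈ A | t < |f y|} := by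
  rw [lintegral_eq_lintegral_meas_lt _ (ae_of_all _ fun y => abs_nonneg (f y)) hf.abs]
  refine lintegral_congr fun t => ?_
  have hlevel : NullMeasurableSet {a | t < |f a|} (μ.restrict A) :=
    hf.abs.nullMeasurable measurableSet_Ioi
  rw [Measure.restrict_apply₀ hlevel, inter_comm]
  rfl

theorem setLIntegral_ofReal_abs_le_weakLpNorm {V : ℝ} (hm : 1 < m) (hV : 0 < V)
    (hA : μ A ≤ ENNReal.ofReal V) (hf : AEMeasurable f (μ.restrict A)) :
    ∫⁻ y in A, ENNReal.ofReal |f y| ∂μ ≤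
      ENNReal.ofReal (m / (m - 1) * V ^ (1 - 1 / m)) * weakLpNorm μ A f m := by
  have hm0 : 0 < m := by linarith
  have hK : 0 < m / (m - 1) * V ^ (1 - 1 / m) :=
    mul_pos (div_pos hm0 (sub_pos.2 hm)) (Real.rpow_pos_of_pos hV _)
  rcases eq_or_ne (weakLpNorm μ A f m) ⊤ with hN | hN
  · rw [hN, ENNReal.mul_top (ENNReal.ofReal_pos.2 hK).ne']
    exact le_top
  rw [setLIntegral_ofReal_abs_eq_lintegral_measure_lt hf, ← ENNReal.ofReal_toReal hN,
    ← ENNReal.ofReal_mul hK.le]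
  exact lintegral_Ioi_le_of_le_const_of_le_rpow hm hV ENNReal.toReal_nonneg
    (fun t _ => (measure_mono (sep_subset _ _)).trans hA)
    (fun t ht => measure_lt_abs_le_of_weakLpNorm_le hm0 ENNReal.toReal_nonneg ht
      (ENNReal.ofReal_toReal hN).ge)

end

theorem setLIntegral_ofReal_abs_le_weakLpNorm_of_subset_ball {E : Type*} [NormedAddCommGroup E]
    [NormedSpace ℝ E] [MeasurableSpace E] [BorelSpace E] [FiniteDimensional ℝ E]
    (μ : Measure E) [μ.IsAddHaarMeasure] {A : Set E} {f : E → ℝ} {x : E} {ρ m : ℝ}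
    (hm : 1 < m) (hρ : 0 < ρ) (hA : A ⊆ ball x ρ) (hf : AEMeasurable f (μ.restrict A)) :
    ∫⁻ y in A, ENNReal.ofReal |f y| ∂μ ≤
      ENNReal.ofReal (m / (m - 1) * (μ (ball 0 1)).toReal ^ (1 - 1 / m) *
        ρ ^ ((Module.finrank ℝ E : ℝ) - Module.finrank ℝ E / m)) * weakLpNorm μ A f m := by
  set d : ℝ := (Module.finrank ℝ E : ℝ)
  set ω := (μ (ball 0 1)).toReal
  have hω : 0 < ω := ENNReal.toReal_pos (measure_ball_pos μ 0 one_pos).ne' measure_ball_lt_top.ne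
  have hμA : μ A ≤ ENNReal.ofReal (ω * ρ ^ d) :=
    calc μ A ≤ μ (ball x ρ) := measure_mono hA
      _ = ENNReal.ofReal (ω * ρ ^ d) := by
        rw [Measure.addHaar_ball_of_pos μ x hρ, ← ENNReal.ofReal_toReal measure_ball_lt_top.ne,
          ← ENNReal.ofReal_mul (by positivity), mul_comm, Real.rpow_natCast]
  convert setLIntegral_ofReal_abs_le_weakLpNorm hm (by positivity) hμA hf using 3
  rw [Real.mul_rpow hω.le (by positivity), ← Real.rpow_mul hρ.le, mul_assoc]
  congr 3
  field_simp

theorem stmt6_general (n : ℕ) (m : ℝ) (hm : 1 < m) :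
    ∃ C : ℝ, 0 < C ∧
      ∀ (Ω : Set (EuclideanSpace ℝ (Fin n)))
        (f : EuclideanSpace ℝ (Fin n) → ℝ) (κ : ℝ),
        Bornology.IsBounded Ω → MeasurableSet Ω → 0 < Metric.diam Ω →
        IntegrableOn f Ω → 0 < κ → κ ≤ n →
        (⨆ (x : EuclideanSpace ℝ (Fin n)) (_ : x ∈ Ω)
            (ρ : ℝ) (_ : 0 < ρ) (_ : ρ < Metric.diam Ω),
          ENNReal.ofReal (ρ ^ (κ / m - n)) *
            ∫⁻ y in ball x ρ ∩ Ω, ENNReal.ofReal |f y|) ≤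
          ENNReal.ofReal C *
            ⨆ (x' : EuclideanSpace ℝ (Fin n)) (_ : x' ∈ Ω)
              (ρ' : ℝ) (_ : 0 < ρ') (_ : ρ' < Metric.diam Ω),
              ENNReal.ofReal (ρ' ^ ((κ - n) / m)) *
                ⨆ (t : ℝ) (_ : 0 < t),
                  ENNReal.ofReal t *
                    (volume {y ∈ ball x' ρ' ∩ Ω | t < |f y|}) ^ (1 / m) := by
  set C := m / (m - 1) * (volume (ball (0 : EuclideanSpace ℝ (Fin n)) 1)).toReal ^ (1 - 1 / m)
  have hC : 0 < C := mul_pos (div_pos (by linarith) (sub_pos.2 hm)) <|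
    Real.rpow_pos_of_pos (ENNReal.toReal_pos (measure_ball_pos _ _ one_pos).ne'
      measure_ball_lt_top.ne) _
  refine ⟨C, hC, fun Ω f κ _ _ _ hf _ _ =>
    iSup₂_le fun x hx => iSup₂_le fun ρ hρ => iSup_le fun hρΩ => ?_⟩
  have hball := setLIntegral_ofReal_abs_le_weakLpNorm_of_subset_ball volume hm hρ
    (inter_subset_left (t := Ω)) (hf.aemeasurable.mono_set (inter_subset_right (s := ball x ρ)))
  rw [finrank_euclideanSpace_fin, ENNReal.ofReal_mul hC.le] at hball
  have hexp : ENNReal.ofReal (ρ ^ (κ / m - n)) * ENNReal.ofReal (ρ ^ ((n : ℝ) - n / m)) =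
      ENNReal.ofReal (ρ ^ ((κ - n) / m)) := by
    rw [← ENNReal.ofReal_mul (by positivity), ← Real.rpow_add hρ]
    congr 2
    ring
  calc ENNReal.ofReal (ρ ^ (κ / m - n)) * ∫⁻ y in ball x ρ ∩ Ω, ENNReal.ofReal |f y|
      ≤ ENNReal.ofReal (ρ ^ (κ / m - n)) * (ENNReal.ofReal C *
          ENNReal.ofReal (ρ ^ ((n : ℝ) - n / m)) * weakLpNorm volume (ball x ρ ∩ Ω) f m) := by
        gcongr
    _ = ENNReal.ofReal C *
          (ENNReal.ofReal (ρ ^ ((κ - n) / m)) * weakLpNorm volume (ball x ρ ∩ Ω) f m) := by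
        rw [← hexp]
        ring
    _ ≤ _ := by
        gcongr
        exact le_iSup₂_of_le x hx (le_iSup₂_of_le ρ hρ (le_iSup_of_le hρΩ le_rfl))

/-- The truncated fractional maximal function of the datum is controlled by its
weak Lorentz–Morrey norm: for `Ω ⊆ ℝⁿ` bounded with `T₀ = diam Ω > 0`,
`f ∈ L¹(Ω)`, `m > 1`, `0 < κ ≤ n` and `θ = κ/m`,
`sup_{x ∈ Ω, 0<ρ<T₀} ρ^{θ-n} ∫_{B_ρ(x)∩Ω} |f| ≤
  C(n,m) · sup_{x'∈Ω, 0<ρ'<T₀} ρ'^{(κ-n)/m} ‖f‖_{L^{m,∞}(B_{ρ'}(x')∩Ω)}`. -/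
theorem stmt6 (n : ℕ) (hn : 2 ≤ n) (m : ℝ) (hm : 1 < m) :
    ∃ C : ℝ, 0 < C ∧
      ∀ (Ω : Set (EuclideanSpace ℝ (Fin n)))
        (f : EuclideanSpace ℝ (Fin n) → ℝ) (κ : ℝ),
        Bornology.IsBounded Ω → MeasurableSet Ω → 0 < Metric.diam Ω →
        IntegrableOn f Ω → 0 < κ → κ ≤ n →
        (⨆ (x : EuclideanSpace ℝ (Fin n)) (_ : x ∈ Ω)
            (ρ : ℝ) (_ : 0 < ρ) (_ : ρ < Metric.diam Ω),
          ENNReal.ofReal (ρ ^ (κ / m - n)) *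
            ∫⁻ y in ball x ρ ∩ Ω, ENNReal.ofReal |f y|) ≤
          ENNReal.ofReal C *
            ⨆ (x' : EuclideanSpace ℝ (Fin n)) (_ : x' ∈ Ω)
              (ρ' : ℝ) (_ : 0 < ρ') (_ : ρ' < Metric.diam Ω),
              ENNReal.ofReal (ρ' ^ ((κ - n) / m)) *
                ⨆ (t : ℝ) (_ : 0 < t),
                  ENNReal.ofReal t *
                    (volume {y ∈ ball x' ρ' ∩ Ω | t < |f y|}) ^ (1 / m) :=
  stmt6_general n m hm
end
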